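/- (Interpolation regime.) Under the hypotheses of the staged strongly convex convergence theorem with σ² = 0 — i.e., f convex differentiable with minimizer w_⋆; in each stage s, P^{(s)} symmetric positive definite with f(w) − f(w_⋆) ≥ (γ̂_ℓ/2)‖w − w_⋆‖²_{P^{(s)}} for all w; iterates w_{k+1}^{(s)} = w_k^{(s)} − η (P^{(s)})^{-1}g_k^{(s)} with conditionally unbiased g_k^{(s)} satisfying E_k‖g_k^{(s)}‖²_{(P^{(s)})^{-1}} ≤ 4L_P·(f(w_k^{(s)}) − f(w_⋆)); stage averaging as before — if η = 1/(4L_P), m = 16L_P/γ̂_ℓ inner iterations per stage, and s = 2·log(2(f(w_0) − f(w_⋆))/ε) stages (so ms total iterations of order (L_P/γ̂_ℓ)·log(1/ε)), then E[f(ŵ^{(s)}) − f(w_⋆)] ≤ ε. -/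

import Mathlib

/-! In the `P`-norm, one step `w ↦ w - η P⁻¹ g` with conditionally unbiased `g` changes
`E‖w - w⋆‖²_P` by `-2η E⟨w - w⋆, ∇f(w)⟩ + η² E‖g‖²_{P⁻¹}`. Convexity bounds the first term by
`-2η E[f(w) - f⋆]` and the variance bound the second by `4L_P η² E[f(w) - f⋆]`, so for
`η = 1/(4L_P)` every step decreases `E‖w - w⋆‖²_P` by `η E[f(w) - f⋆]`. Summing over a stage and
bounding `‖w₀ - w⋆‖²_P` by quadratic growth, Jensen's inequality shows that the stage average has
expected gap at most `2/(γ̂_ℓ η m) ≤ 1/2` times that of the stage's starting point. After `S` stages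
the gap is at most `2^{-S} (f(w₀) - f⋆) ≤ ε`. -/

open Matrix MeasureTheory

/-- The gradient of `f : ℝᵖ → ℝ`, as the vector of partial derivatives. -/
noncomputable def gradVec {p : ℕ} (f : (Fin p → ℝ) → ℝ) (w : Fin p → ℝ) : Fin p → ℝ :=
  fun i => fderiv ℝ f w (Pi.single i 1)

namespace Matrix

variable {n : Type*} [Fintype n]

lemma PosSemidef.dotProduct_mulVec_self_nonneg {Q : Matrix n n ℝ} (hQ : Q.PosSemidef)
    (x : n → ℝ) : 0 ≤ x ⬝ᵥ Q *ᵥ x := by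
  simpa using hQ.dotProduct_mulVec_nonneg x

lemma PosDef.inv_mulVec_dotProduct_mulVec [DecidableEq n] {Q : Matrix n n ℝ} (hQ : Q.PosDef)
    (v x : n → ℝ) : (Q⁻¹ *ᵥ v) ⬝ᵥ Q *ᵥ x = x ⬝ᵥ v := by
  have hQt : Qᵀ = Q := by rw [← conjTranspose_eq_transpose_of_trivial]; exact hQ.1
  rw [dotProduct_mulVec, ← mulVec_transpose, hQt, mulVec_mulVec,
    mul_nonsing_inv _ ((isUnit_iff_isUnit_det Q).1 hQ.isUnit), one_mulVec, dotProduct_comm]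

lemma PosDef.dotProduct_mulVec_sub_smul_inv_mulVec [DecidableEq n] {Q : Matrix n n ℝ}
    (hQ : Q.PosDef) (x v : n → ℝ) (η : ℝ) :
    (x - η • Q⁻¹ *ᵥ v) ⬝ᵥ Q *ᵥ (x - η • Q⁻¹ *ᵥ v)
      = x ⬝ᵥ Q *ᵥ x - 2 * η * (x ⬝ᵥ v) + η ^ 2 * (v ⬝ᵥ Q⁻¹ *ᵥ v) := by
  have hx : x ⬝ᵥ Q *ᵥ (Q⁻¹ *ᵥ v) = x ⬝ᵥ v := by
    rw [mulVec_mulVec, mul_nonsing_inv _ ((isUnit_iff_isUnit_det Q).1 hQ.isUnit), one_mulVec]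
  have hv : (Q⁻¹ *ᵥ v) ⬝ᵥ Q *ᵥ (Q⁻¹ *ᵥ v) = v ⬝ᵥ Q⁻¹ *ᵥ v := by
    rw [hQ.inv_mulVec_dotProduct_mulVec, dotProduct_comm]
  simp only [mulVec_sub, mulVec_smul, dotProduct_sub, sub_dotProduct, dotProduct_smul,
    smul_dotProduct, smul_eq_mul, hx, hv, hQ.inv_mulVec_dotProduct_mulVec]
  ring

lemma PosDef.two_mul_abs_dotProduct_le [DecidableEq n] {Q : Matrix n n ℝ} (hQ : Q.PosDef)
    (x v : n → ℝ) : 2 * |x ⬝ᵥ v| ≤ x ⬝ᵥ Q *ᵥ x + v ⬝ᵥ Q⁻¹ *ᵥ v := by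
  have h₁ := hQ.posSemidef.dotProduct_mulVec_self_nonneg (x - (1 : ℝ) • Q⁻¹ *ᵥ v)
  have h₂ := hQ.posSemidef.dotProduct_mulVec_self_nonneg (x - (-1 : ℝ) • Q⁻¹ *ᵥ v)
  rw [hQ.dotProduct_mulVec_sub_smul_inv_mulVec] at h₁ h₂
  norm_num at h₁ h₂
  cases abs_cases (x ⬝ᵥ v) <;> linarith

variable {ι : Type*} [Fintype ι]

noncomputable def dotProductCLM : (ι → ℝ) →L[ℝ] (ι → ℝ) →L[ℝ] ℝ :=
  LinearMap.toContinuousLinearMap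
    ((LinearMap.toContinuousLinearMap : ((ι → ℝ) →ₗ[ℝ] ℝ) ≃ₗ[ℝ] _).toLinearMap ∘ₗ
      dotProductBilin ℝ ℝ)

end Matrix

lemma ConvexOn.sub_le_of_hasFDerivAt {E : Type*} [NormedAddCommGroup E] [NormedSpace ℝ E]
    {f : E → ℝ} {f' : E →L[ℝ] ℝ} {x : E} (hf : ConvexOn ℝ Set.univ f) (hx : HasFDerivAt f f' x)
    (y : E) : f x - f y ≤ f' (x - y) := by
  have hφ : ConvexOn ℝ Set.univ (f ∘ (AffineMap.lineMap x y : ℝ →ᵃ[ℝ] E)) := by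
    simpa using hf.comp_affineMap (AffineMap.lineMap x y)
  have hφ' : HasDerivAt (f ∘ (AffineMap.lineMap x y : ℝ →ᵃ[ℝ] E)) (f' (y - x)) 0 := by
    have := (AffineMap.lineMap_apply_zero x y (k := ℝ)).symm ▸ hx
    exact this.comp_hasDerivAt 0 AffineMap.hasDerivAt_lineMap
  have hslope : slope (f ∘ (AffineMap.lineMap x y : ℝ →ᵃ[ℝ] E)) 0 1 = f y - f x := by
    simp [slope]
  have := hφ.le_slope_of_hasDerivAt (Set.mem_univ 0) (Set.mem_univ 1) one_pos hφ'
  rw [← neg_sub y x, map_neg]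
  linarith

lemma dotProduct_gradVec {p : ℕ} (f : (Fin p → ℝ) → ℝ) (w v : Fin p → ℝ) :
    v ⬝ᵥ gradVec f w = fderiv ℝ f w v := by
  conv_rhs => rw [pi_eq_sum_univ' v, map_sum]
  simp [dotProduct, gradVec]

lemma sub_le_dotProduct_gradVec {p : ℕ} {f : (Fin p → ℝ) → ℝ} (hdiff : Differentiable ℝ f)
    (hconv : ConvexOn ℝ Set.univ f) (x y : Fin p → ℝ) :
    f x - f y ≤ (x - y) ⬝ᵥ gradVec f x := by
  rw [dotProduct_gradVec]
  exact hconv.sub_le_of_hasFDerivAt (hdiff x).hasFDerivAt y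

lemma ConvexOn.map_inv_card_smul_sum_le {E ι : Type*} [AddCommGroup E] [Module ℝ E]
    {f : E → ℝ} (hf : ConvexOn ℝ Set.univ f) {s : Finset ι} (hs : s.Nonempty) (x : ι → E) :
    f ((s.card : ℝ)⁻¹ • ∑ i ∈ s, x i) ≤ (s.card : ℝ)⁻¹ * ∑ i ∈ s, f (x i) := by
  rw [Finset.smul_sum, Finset.mul_sum]
  refine hf.map_sum_le (fun _ _ => by positivity) ?_ fun _ _ => Set.mem_univ _
  simp [hs.card_ne_zero]

section Expectation

-- `m0` comes last so that it, not `F`, is the instance behind `μ` and `AEStronglyMeasurable`.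
variable {Ω : Type*} {F m0 : MeasurableSpace Ω} {μ : Measure Ω}

lemma condExp_dotProduct_of_stronglyMeasurable_left {ι : Type*} [Fintype ι]
    {d g : Ω → ι → ℝ} (hd : StronglyMeasurable[F] d)
    (hdg : Integrable (fun ω => d ω ⬝ᵥ g ω) μ) (hg : Integrable g μ) :
    μ[fun ω => d ω ⬝ᵥ g ω|F] =ᵐ[μ] fun ω => d ω ⬝ᵥ μ[g|F] ω :=
  condExp_bilin_of_stronglyMeasurable_left dotProductCLM hd hdg hg

variable [IsFiniteMeasure μ] {p : ℕ} {f : (Fin p → ℝ) → ℝ} {wstar : Fin p → ℝ}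
  {w g : Ω → Fin p → ℝ}

lemma integrable_dist_sq_of_quadratic_growth {P : Matrix (Fin p) (Fin p) ℝ} (hP : P.PosSemidef)
    {γ : ℝ} (hγ : 0 < γ)
    (hgrowth : ∀ x, γ / 2 * ((x - wstar) ⬝ᵥ P *ᵥ (x - wstar)) ≤ f x - f wstar)
    (hw : AEStronglyMeasurable w μ) (hf : Integrable (fun ω => f (w ω)) μ) :
    Integrable (fun ω => (w ω - wstar) ⬝ᵥ P *ᵥ (w ω - wstar)) μ := by
  refine (((hf.sub (integrable_const (f wstar))).const_mul (2 / γ))).mono'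
    (Continuous.comp_aestronglyMeasurable (g := fun x => (x - wstar) ⬝ᵥ P *ᵥ (x - wstar))
      (by fun_prop) hw) (ae_of_all _ fun ω => ?_)
  rw [Real.norm_eq_abs, abs_of_nonneg (hP.dotProduct_mulVec_self_nonneg _), Pi.sub_apply,
    div_mul_eq_mul_div, le_div_iff₀ hγ]
  linarith [hgrowth (w ω)]

lemma integral_sub_le_integral_dotProduct (hdiff : Differentiable ℝ f)
    (hconv : ConvexOn ℝ Set.univ f) (hF : F ≤ m0) (hw : StronglyMeasurable[F] w)
    (hg : Integrable g μ) (hwg : Integrable (fun ω => (w ω - wstar) ⬝ᵥ g ω) μ)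
    (hf : Integrable (fun ω => f (w ω)) μ)
    (hmean : μ[g|F] =ᵐ[μ] fun ω => gradVec f (w ω)) :
    ∫ ω, (f (w ω) - f wstar) ∂μ ≤ ∫ ω, (w ω - wstar) ⬝ᵥ g ω ∂μ := by
  have hpull := condExp_dotProduct_of_stronglyMeasurable_left (d := fun ω => w ω - wstar)
    (hw.sub stronglyMeasurable_const) hwg hg
  calc ∫ ω, (f (w ω) - f wstar) ∂μ
      ≤ ∫ ω, μ[fun ω => (w ω - wstar) ⬝ᵥ g ω|F] ω ∂μ := by
        refine integral_mono_ae (hf.sub (integrable_const _)) integrable_condExp ?_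
        filter_upwards [hpull, hmean] with ω h₁ h₂
        rw [h₁, h₂]
        exact sub_le_dotProduct_gradVec hdiff hconv _ _
    _ = ∫ ω, (w ω - wstar) ⬝ᵥ g ω ∂μ := integral_condExp hF

lemma integral_dist_sq_sub_smul_le (hdiff : Differentiable ℝ f)
    (hconv : ConvexOn ℝ Set.univ f) {P : Matrix (Fin p) (Fin p) ℝ} (hP : P.PosDef)
    (hF : F ≤ m0) (hw : StronglyMeasurable[F] w) (hg : Integrable g μ)
    (hg2 : Integrable (fun ω => g ω ⬝ᵥ P⁻¹ *ᵥ g ω) μ) (hf : Integrable (fun ω => f (w ω)) μ)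
    (hX : Integrable (fun ω => (w ω - wstar) ⬝ᵥ P *ᵥ (w ω - wstar)) μ)
    (hmean : μ[g|F] =ᵐ[μ] fun ω => gradVec f (w ω)) {L η : ℝ}
    (hvar : ∀ᵐ ω ∂μ, μ[fun ω' => g ω' ⬝ᵥ P⁻¹ *ᵥ g ω'|F] ω ≤ 4 * L * (f (w ω) - f wstar))
    (hη : 0 ≤ η) :
    ∫ ω, (w ω - η • P⁻¹ *ᵥ g ω - wstar) ⬝ᵥ P *ᵥ (w ω - η • P⁻¹ *ᵥ g ω - wstar) ∂μ
      ≤ ∫ ω, (w ω - wstar) ⬝ᵥ P *ᵥ (w ω - wstar) ∂μ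
        - η * (2 - 4 * L * η) * ∫ ω, (f (w ω) - f wstar) ∂μ := by
  set X := fun ω => (w ω - wstar) ⬝ᵥ P *ᵥ (w ω - wstar)
  set D := fun ω => (w ω - wstar) ⬝ᵥ g ω
  set N := fun ω => g ω ⬝ᵥ P⁻¹ *ᵥ g ω
  have hD : Integrable D μ := by
    refine ((hX.add hg2).div_const 2).mono' ?_ (ae_of_all _ fun ω => ?_)
    · exact (Continuous.comp_aestronglyMeasurable₂ (g := fun x y => x ⬝ᵥ y) (by fun_prop)
        ((hw.mono hF).sub stronglyMeasurable_const).aestronglyMeasurable hg.1)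
    · have := hP.two_mul_abs_dotProduct_le (w ω - wstar) (g ω)
      rw [Real.norm_eq_abs]
      simp only [X, N, Pi.add_apply]
      linarith
  have hexpand : (fun ω => (w ω - η • P⁻¹ *ᵥ g ω - wstar) ⬝ᵥ P *ᵥ (w ω - η • P⁻¹ *ᵥ g ω - wstar))
      = fun ω => X ω - 2 * η * D ω + η ^ 2 * N ω := by
    ext ω
    rw [sub_right_comm]
    exact hP.dotProduct_mulVec_sub_smul_inv_mulVec _ _ _
  have hdrift : ∫ ω, (f (w ω) - f wstar) ∂μ ≤ ∫ ω, D ω ∂μ :=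
    integral_sub_le_integral_dotProduct hdiff hconv hF hw hg hD hf hmean
  have hnoise : ∫ ω, N ω ∂μ ≤ 4 * L * ∫ ω, (f (w ω) - f wstar) ∂μ := by
    rw [← integral_condExp hF, ← integral_const_mul]
    exact integral_mono_ae integrable_condExp
      ((hf.sub (integrable_const _)).const_mul _) hvar
  rw [hexpand, integral_add (f := fun ω => X ω - 2 * η * D ω) (hX.sub (hD.const_mul _))
    (hg2.const_mul _), integral_sub hX (hD.const_mul _), integral_const_mul, integral_const_mul]
  nlinarith [mul_le_mul_of_nonneg_left hdrift hη, mul_le_mul_of_nonneg_left hnoise (sq_nonneg η)]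

end Expectation

section Stage

variable {Ω : Type*} {m0 : MeasurableSpace Ω} {μ : Measure Ω} [IsFiniteMeasure μ] {p : ℕ}
  {f : (Fin p → ℝ) → ℝ} {wstar : Fin p → ℝ}

theorem mul_integral_gap_average_le (hdiff : Differentiable ℝ f)
    (hconv : ConvexOn ℝ Set.univ f) {P : Matrix (Fin p) (Fin p) ℝ} (hP : P.PosDef) {γ L η : ℝ}
    (hγ : 0 < γ) (hgrowth : ∀ x, γ / 2 * ((x - wstar) ⬝ᵥ P *ᵥ (x - wstar)) ≤ f x - f wstar)
    (hη : 0 ≤ η) (hηL : η * (4 * L) = 1) {m : ℕ} (hm : 0 < m)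
    (𝒢 : ℕ → MeasurableSpace Ω) (h𝒢 : ∀ k, 𝒢 k ≤ m0) (v g : ℕ → Ω → Fin p → ℝ)
    (hv : ∀ k, StronglyMeasurable[𝒢 k] (v k)) (hg : ∀ k, Integrable (g k) μ)
    (hg2 : ∀ k, Integrable (fun ω => g k ω ⬝ᵥ P⁻¹ *ᵥ g k ω) μ)
    (hf : ∀ k, Integrable (fun ω => f (v k ω)) μ)
    (hupd : ∀ k ω, v (k + 1) ω = v k ω - η • P⁻¹ *ᵥ g k ω)
    (hmean : ∀ k, μ[g k|𝒢 k] =ᵐ[μ] fun ω => gradVec f (v k ω))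
    (hvar : ∀ k, ∀ᵐ ω ∂μ,
      μ[fun ω' => g k ω' ⬝ᵥ P⁻¹ *ᵥ g k ω'|𝒢 k] ω ≤ 4 * L * (f (v k ω) - f wstar))
    (u : Ω → Fin p → ℝ) (hu : ∀ ω, u ω = (m : ℝ)⁻¹ • ∑ k ∈ Finset.range m, v k ω)
    (hfu : Integrable (fun ω => f (u ω)) μ) :
    γ * η * m * ∫ ω, (f (u ω) - f wstar) ∂μ ≤ 2 * ∫ ω, (f (v 0 ω) - f wstar) ∂μ := by
  set a := fun k => ∫ ω, (f (v k ω) - f wstar) ∂μ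
  have hgap k : Integrable (fun ω => f (v k ω) - f wstar) μ := (hf k).sub (integrable_const _)
  set x := fun k => ∫ ω, (v k ω - wstar) ⬝ᵥ P *ᵥ (v k ω - wstar) ∂μ
  have hX k := integrable_dist_sq_of_quadratic_growth hP.posSemidef hγ hgrowth
    ((hv k).mono (h𝒢 k)).aestronglyMeasurable (hf k)
  have hstep k : x (k + 1) + η * a k ≤ x k := by
    have := integral_dist_sq_sub_smul_le hdiff hconv hP (h𝒢 k) (hv k) (hg k) (hg2 k) (hf k)
      (hX k) (hmean k) (hvar k) hη
    simp only [x, a, hupd]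
    linear_combination this + η * a k * hηL
  have hdescent : η * ∑ k ∈ Finset.range m, a k ≤ x 0 := by
    have hxm : 0 ≤ x m := integral_nonneg fun ω => hP.posSemidef.dotProduct_mulVec_self_nonneg _
    calc η * ∑ k ∈ Finset.range m, a k ≤ ∑ k ∈ Finset.range m, (x k - x (k + 1)) := by
          rw [Finset.mul_sum]
          exact Finset.sum_le_sum fun k _ => by linarith [hstep k]
      _ = x 0 - x m := Finset.sum_range_sub' x m
      _ ≤ x 0 := by linarith
  have hx0 : γ * x 0 ≤ 2 * a 0 := by
    have := integral_mono ((hX 0).const_mul (γ / 2)) (hgap 0) fun ω => hgrowth (v 0 ω)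
    rw [integral_const_mul] at this
    linarith
  have hjensen : (m : ℝ) * ∫ ω, (f (u ω) - f wstar) ∂μ ≤ ∑ k ∈ Finset.range m, a k := by
    have hpt ω : f (u ω) - f wstar
        ≤ (m : ℝ)⁻¹ * ∑ k ∈ Finset.range m, (f (v k ω) - f wstar) := by
      have := hconv.map_inv_card_smul_sum_le (Finset.nonempty_range_iff.2 hm.ne') (v · ω)
      rw [Finset.card_range, ← hu] at this
      rw [Finset.sum_sub_distrib, Finset.sum_const, Finset.card_range, nsmul_eq_mul, mul_sub,
        inv_mul_cancel_left₀ (by positivity)]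
      linarith
    have := integral_mono (hfu.sub (integrable_const _))
      ((integrable_finsetSum _ fun k _ => hgap k).const_mul _) hpt
    rw [integral_const_mul, integral_finsetSum _ fun k _ => hgap k] at this
    rwa [← le_inv_mul_iff₀ (by positivity)]
  nlinarith [mul_le_mul_of_nonneg_left hjensen (mul_nonneg hγ.le hη),
    mul_le_mul_of_nonneg_left hdescent hγ.le]

end Stage

lemma one_div_two_pow_mul_le_of_two_mul_log_le {Δ ε : ℝ} (hε : 0 < ε) {S : ℕ}
    (hS : 2 * Real.log (2 * Δ / ε) ≤ S) : (1 / 2) ^ S * Δ ≤ ε := by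
  rw [div_pow, one_pow, div_mul_eq_mul_div, one_mul, div_le_iff₀ (by positivity)]
  rcases le_or_gt (2 * Δ) ε with hsmall | hlarge
  · nlinarith [one_le_pow₀ (M₀ := ℝ) (a := 2) (by norm_num) (n := S)]
  · have hratio : 1 < 2 * Δ / ε := by rwa [one_lt_div hε]
    have hlog : Real.log (2 * Δ / ε) ≤ Real.log (2 ^ S) := by
      rw [Real.log_pow]
      nlinarith [Real.log_pos hratio, Real.log_two_gt_d9]
    have := (Real.log_le_log_iff (by positivity) (by positivity)).1 hlog
    rw [div_le_iff₀ hε] at this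
    linarith

theorem sketchySGD_interpolation_convergence_general {p : ℕ}
    (f : (Fin p → ℝ) → ℝ) (hdiff : Differentiable ℝ f)
    (hconv : ConvexOn ℝ Set.univ f)
    (wstar : Fin p → ℝ) (hmin : ∀ w, f wstar ≤ f w)
    (LP γℓ ε : ℝ) (hLP : 0 < LP) (hγ : 0 < γℓ) (hε : 0 < ε)
    (P : ℕ → Matrix (Fin p) (Fin p) ℝ) (hP : ∀ s, (P s).PosDef)
    (hlow : ∀ (s : ℕ) (w : Fin p → ℝ),
      f w - f wstar ≥ γℓ / 2 * ((w - wstar) ⬝ᵥ (P s).mulVec (w - wstar)))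
    (m S : ℕ) (hm : 0 < m)
    (hm' : (m : ℝ) ≥ 16 * LP / γℓ)
    {Ω : Type} {m0 : MeasurableSpace Ω} (μ : Measure Ω) [IsProbabilityMeasure μ]
    (ℱ : ℕ → MeasurableSpace Ω) (hℱ : ∀ t, ℱ t ≤ m0)
    (w g : ℕ → ℕ → Ω → Fin p → ℝ)
    (w0 : Fin p → ℝ) (hw0 : w 0 0 = fun _ => w0)
    (hSlog : (S : ℝ) ≥ 2 * Real.log (2 * (f w0 - f wstar) / ε))
    (hadapt : ∀ s k, StronglyMeasurable[ℱ (s * m + k)] (w s k))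
    (hgint : ∀ s k, Integrable (g s k) μ)
    (hg2int : ∀ s k,
      Integrable (fun ω => g s k ω ⬝ᵥ ((P s)⁻¹).mulVec (g s k ω)) μ)
    (hfint : ∀ s k, Integrable (fun ω => f (w s k ω)) μ)
    (η : ℝ) (hη : η = 1 / (4 * LP))
    (hupd : ∀ s k ω, w s (k + 1) ω = w s k ω - η • ((P s)⁻¹).mulVec (g s k ω))
    (hstage : ∀ s ω, w (s + 1) 0 ω = (m : ℝ)⁻¹ • ∑ k ∈ Finset.range m, w s k ω)
    (hmean : ∀ s k, μ[g s k|ℱ (s * m + k)] =ᵐ[μ] fun ω => gradVec f (w s k ω))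
    (hvar : ∀ s k, ∀ᵐ ω ∂μ,
      (μ[fun ω' => g s k ω' ⬝ᵥ ((P s)⁻¹).mulVec (g s k ω')|ℱ (s * m + k)]) ω
        ≤ 4 * LP * (f (w s k ω) - f wstar)) :
    (∫ ω, f (w S 0 ω) ∂μ) - f wstar ≤ ε := by
  have hη0 : 0 ≤ η := by rw [hη]; positivity
  have hηL : η * (4 * LP) = 1 := by rw [hη]; field_simp
  set gap := fun s => ∫ ω, (f (w s 0 ω) - f wstar) ∂μ
  have hhalve s : gap (s + 1) ≤ 1 / 2 * gap s := by
    have hcontract := mul_integral_gap_average_le hdiff hconv (hP s) hγ (hlow s) hη0 hηL hm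
      (fun k => ℱ (s * m + k)) (fun k => hℱ _) (w s) (g s) (hadapt s) (hgint s) (hg2int s)
      (hfint s) (hupd s) (hmean s) (hvar s) (w (s + 1) 0) (hstage s) (hfint (s + 1) 0)
    have hstep_size : 4 ≤ γℓ * η * m := by
      rw [ge_iff_le, div_le_iff₀ hγ] at hm'
      rw [hη]
      field_simp
      linarith
    have hgap_nonneg : 0 ≤ gap (s + 1) := integral_nonneg fun ω => sub_nonneg.2 (hmin _)
    linarith [mul_le_mul_of_nonneg_right hstep_size hgap_nonneg]
  have hgap_zero : gap 0 = f w0 - f wstar := by simp [gap, hw0]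
  calc (∫ ω, f (w S 0 ω) ∂μ) - f wstar = gap S := by
        simp only [gap]
        rw [integral_sub (hfint S 0) (integrable_const _)]
        simp
    _ ≤ (1 / 2) ^ S * gap 0 := le_geom (by norm_num) S fun k _ => hhalve k
    _ ≤ ε := by
        rw [hgap_zero]
        exact one_div_two_pow_mul_le_of_two_mul_log_le hε hSlog

/-- **SketchySGD convergence under interpolation (`σ² = 0`).**
Let `f` be convex and differentiable with minimizer `w⋆`, `ρ, L_P, γ̂_ℓ, ε > 0`.
In each stage `s` a positive definite `P⁽ˢ⁾` satisfies
`f(w) − f(w⋆) ≥ (γ̂_ℓ/2)‖w − w⋆‖²_{P⁽ˢ⁾}`, and the inner iterates are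
`w_{k+1}⁽ˢ⁾ = w_k⁽ˢ⁾ − η(P⁽ˢ⁾)⁻¹g_k⁽ˢ⁾` with conditionally unbiased `g_k⁽ˢ⁾`
satisfying `E_k‖g_k⁽ˢ⁾‖²_{(P⁽ˢ⁾)⁻¹} ≤ 4L_P(f(w_k⁽ˢ⁾) − f(w⋆))`; each stage starts at
the average of the previous stage.  With `η = 1/(4L_P)`, `m ≥ 16L_P/γ̂_ℓ` inner
iterations per stage, and `S ≥ 2·log(2(f(w₀) − f(w⋆))/ε)` stages, the output `ŵ⁽ˢ⁾`
satisfies `E[f(ŵ⁽ˢ⁾) − f(w⋆)] ≤ ε`. -/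
theorem sketchySGD_interpolation_convergence {p : ℕ}
    (f : (Fin p → ℝ) → ℝ) (hdiff : Differentiable ℝ f)
    (hconv : ConvexOn ℝ Set.univ f)
    (wstar : Fin p → ℝ) (hmin : ∀ w, f wstar ≤ f w)
    (ρ LP γℓ ε : ℝ) (hρ : 0 < ρ) (hLP : 0 < LP) (hγ : 0 < γℓ) (hε : 0 < ε)
    (P : ℕ → Matrix (Fin p) (Fin p) ℝ) (hP : ∀ s, (P s).PosDef)
    (hlow : ∀ (s : ℕ) (w : Fin p → ℝ),
      f w - f wstar ≥ γℓ / 2 * ((w - wstar) ⬝ᵥ (P s).mulVec (w - wstar)))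
    (m S : ℕ) (hm : 0 < m) (hS : 0 < S)
    (hm' : (m : ℝ) ≥ 16 * LP / γℓ)
    {Ω : Type} {m0 : MeasurableSpace Ω} (μ : Measure Ω) [IsProbabilityMeasure μ]
    (ℱ : ℕ → MeasurableSpace Ω) (hℱ : ∀ t, ℱ t ≤ m0) (hℱmono : Monotone ℱ)
    (w g : ℕ → ℕ → Ω → Fin p → ℝ)
    (w0 : Fin p → ℝ) (hw0 : w 0 0 = fun _ => w0)
    (hSlog : (S : ℝ) ≥ 2 * Real.log (2 * (f w0 - f wstar) / ε))
    (hadapt : ∀ s k, StronglyMeasurable[ℱ (s * m + k)] (w s k))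
    (hgint : ∀ s k, Integrable (g s k) μ)
    (hg2int : ∀ s k,
      Integrable (fun ω => g s k ω ⬝ᵥ ((P s)⁻¹).mulVec (g s k ω)) μ)
    (hfint : ∀ s k, Integrable (fun ω => f (w s k ω)) μ)
    (η : ℝ) (hη : η = 1 / (4 * LP))
    (hupd : ∀ s k ω, w s (k + 1) ω = w s k ω - η • ((P s)⁻¹).mulVec (g s k ω))
    (hstage : ∀ s ω, w (s + 1) 0 ω = (m : ℝ)⁻¹ • ∑ k ∈ Finset.range m, w s k ω)
    (hmean : ∀ s k, μ[g s k|ℱ (s * m + k)] =ᵐ[μ] fun ω => gradVec f (w s k ω))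
    (hvar : ∀ s k, ∀ᵐ ω ∂μ,
      (μ[fun ω' => g s k ω' ⬝ᵥ ((P s)⁻¹).mulVec (g s k ω')|ℱ (s * m + k)]) ω
        ≤ 4 * LP * (f (w s k ω) - f wstar)) :
    (∫ ω, f (w S 0 ω) ∂μ) - f wstar ≤ ε :=
  sketchySGD_interpolation_convergence_general f hdiff hconv wstar hmin LP γℓ ε hLP hγ hε P hP hlow
    m S hm hm' μ ℱ hℱ w g w0 hw0 hSlog hadapt hgint hg2int hfint η hη hupd hstage hmean hvar
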